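/- Let 0 < a_1 < ⋯ < a_l = 1, let z = (z_1,…,z_l) ∈ ∏_{j=1}^l ℂ^{k_j}, and let t ∈ ℝ. If z_l ≠ 0, then for every t there exists exactly one θ ∈ (−π,π) such that t = Σ_{j=1}^l a_j μ(a_jθ)|z_j|². If z_l = 0 and |t| < Σ_{j=1}^{l−1} a_j μ(a_jπ)|z_j|², the same equation also has exactly one solution θ ∈ (−π,π). -/

import Mathlib

open MeasureTheory Real Complex Finset Filter Topology

noncomputable section

/-- The underlying space of the nonisotropic Heisenberg group `ℍ(𝒦,𝒜)`, where the number of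
blocks is `l + 1`, the block dimensions are `k 0, …, k l` and the parameters are
`a 0 < ⋯ < a l`. A point is a pair `(z, t)` with `z i : Fin (k i) → ℂ` and `t : ℝ`. -/
abbrev Heis (l : ℕ) (k : Fin (l + 1) → ℕ) : Type :=
  ((i : Fin (l + 1)) → (Fin (k i) → ℂ)) × ℝ

variable (l : ℕ) (k : Fin (l + 1) → ℕ) (a : Fin (l + 1) → ℝ)

/-- The group multiplication of `ℍ(𝒦,𝒜)`:
`(z,t)·(z′,t′) = (z + z′, t + t′ + 2 ∑ᵢ aᵢ Im⟨zᵢ, zᵢ′⟩)`. -/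
def hmul (g g' : Heis l k) : Heis l k :=
  (g.1 + g'.1,
    g.2 + g'.2 + 2 * ∑ i, a i * (∑ j, (starRingEnd ℂ) (g.1 i j) * g'.1 i j).im)

/-- The group inversion of `ℍ(𝒦,𝒜)`: `(z,t)⁻¹ = (-z,-t)`. -/
def hinv (g : Heis l k) : Heis l k := (-g.1, -g.2)

/-- `|z i|²`, the squared Euclidean norm of the `i`-th block of `z`. -/
def zNormSq (z : (i : Fin (l + 1)) → Fin (k i) → ℂ) (i : Fin (l + 1)) : ℝ :=
  ∑ j, Complex.normSq (z i j)

/-- The left-invariant vector field `X_{i,j} = ∂_{x_{i,j}} + 2 aᵢ y_{i,j} ∂_t`, applied to a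
function `f` at a point `g`, realized as a directional (line) derivative. -/
def Xvf (i : Fin (l + 1)) (j : Fin (k i)) (f : Heis l k → ℝ) (g : Heis l k) : ℝ :=
  lineDeriv ℝ f g (Pi.single i (Pi.single j (1 : ℂ)), 2 * a i * (g.1 i j).im)

/-- The left-invariant vector field `Y_{i,j} = ∂_{y_{i,j}} - 2 aᵢ x_{i,j} ∂_t`. -/
def Yvf (i : Fin (l + 1)) (j : Fin (k i)) (f : Heis l k → ℝ) (g : Heis l k) : ℝ :=
  lineDeriv ℝ f g (Pi.single i (Pi.single j (Complex.I)), -(2 * a i * (g.1 i j).re))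

/-- The right-invariant vector field `X̂_{i,j} = ∂_{x_{i,j}} - 2 aᵢ y_{i,j} ∂_t`. -/
def XvfR (i : Fin (l + 1)) (j : Fin (k i)) (f : Heis l k → ℝ) (g : Heis l k) : ℝ :=
  lineDeriv ℝ f g (Pi.single i (Pi.single j (1 : ℂ)), -(2 * a i * (g.1 i j).im))

/-- The right-invariant vector field `Ŷ_{i,j} = ∂_{y_{i,j}} + 2 aᵢ x_{i,j} ∂_t`. -/
def YvfR (i : Fin (l + 1)) (j : Fin (k i)) (f : Heis l k → ℝ) (g : Heis l k) : ℝ :=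
  lineDeriv ℝ f g (Pi.single i (Pi.single j (Complex.I)), 2 * a i * (g.1 i j).re)

/-- `|∇f|(g)`, the Euclidean length of the horizontal (left-invariant) gradient of `f` at `g`. -/
def gradNorm (f : Heis l k → ℝ) (g : Heis l k) : ℝ :=
  Real.sqrt (∑ i, ∑ j, ((Xvf l k a i j f g) ^ 2 + (Yvf l k a i j f g) ^ 2))

/-- The heat kernel `p_h(z,t)` at time `h` of `ℍ(𝒦,𝒜)`, as a complex integral:
`p_h(z,t) = (2(4πh)^{n+1})⁻¹ ∫_ℝ ∏ⱼ (aⱼλ/sinh(aⱼλ))^{kⱼ}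
  exp((4h)⁻¹(iλt − ∑ⱼ |zⱼ|² aⱼλ coth(aⱼλ))) dλ`. -/
def heatKernelC (h : ℝ) (g : Heis l k) : ℂ :=
  (2 * (4 * Real.pi * h) ^ ((∑ i, k i) + 1) : ℂ)⁻¹ *
    ∫ lam : ℝ,
      ((∏ j, ((a j * lam) / Real.sinh (a j * lam)) ^ (k j) : ℝ) : ℂ) *
        Complex.exp ((4 * (h : ℂ))⁻¹ *
          (Complex.I * (lam : ℂ) * (g.2 : ℂ) -
            ∑ j, ((zNormSq l k g.1 j : ℝ) : ℂ) *
              ((a j * lam * (Real.cosh (a j * lam) / Real.sinh (a j * lam)) : ℝ) : ℂ)))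

/-- The (real-valued) heat kernel `p_h` of `ℍ(𝒦,𝒜)`. -/
def heatKernel (h : ℝ) (g : Heis l k) : ℝ := (heatKernelC l k a h g).re

/-- The heat semigroup: `e^{hΔ} f (g) = ∫_ℍ f(g·g′) p_h(g′) dm(g′)`, with `m` the Lebesgue
(Haar) measure on `ℍ(𝒦,𝒜)`. -/
def heatSemigroup (h : ℝ) (f : Heis l k → ℝ) (g : Heis l k) : ℝ :=
  ∫ g' : Heis l k, f (hmul l k a g g') * heatKernel l k a h g'

/-- `μ(ω) = (2ω − sin 2ω)/(2 sin²ω)`; note that at `ω = 0` Lean's convention `0/0 = 0`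
gives exactly the continuous extension `μ(0) = 0`. -/
def muF (ω : ℝ) : ℝ := (2 * ω - Real.sin (2 * ω)) / (2 * Real.sin ω ^ 2)


lemma mu_zero : muF 0 = 0 := by simp [muF]

lemma mu_odd (ω : ℝ) : muF (-ω) = - muF ω := by
  unfold muF
  rw [show (2:ℝ) * -ω = -(2*ω) by ring, Real.sin_neg, Real.sin_neg]
  ring

lemma mu_pos {ω : ℝ} (h0 : 0 < ω) (hπ : ω < π) : 0 < muF ω := by
  have hs : 0 < Real.sin ω := Real.sin_pos_of_pos_of_lt_pi h0 hπ
  have h1 : Real.sin (2*ω) < 2*ω := Real.sin_lt (by linarith)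
  exact div_pos (by linarith) (by positivity)

lemma mu_nonneg {ω : ℝ} (h0 : 0 ≤ ω) (hπ : ω < π) : 0 ≤ muF ω := by
  rcases eq_or_lt_of_le h0 with h|h
  · simp [← h, mu_zero]
  · exact (mu_pos h hπ).le

lemma aux_pos {ω : ℝ} (h0 : 0 < ω) (hπ : ω < π) : 0 < Real.sin ω - ω * Real.cos ω := by
  have key : StrictMonoOn (fun x => Real.sin x - x * Real.cos x) (Set.Icc 0 π) := by
    apply strictMonoOn_of_deriv_pos (convex_Icc 0 π)
    · exact (Real.continuous_sin.sub (continuous_id.mul Real.continuous_cos)).continuousOn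
    · intro x hx
      rw [interior_Icc] at hx
      have h : HasDerivAt (fun x => Real.sin x - x * Real.cos x)
          (Real.cos x - (1 * Real.cos x + x * (-Real.sin x))) x :=
        (Real.hasDerivAt_sin x).sub ((hasDerivAt_id x).mul (Real.hasDerivAt_cos x))
      rw [h.deriv]
      have := Real.sin_pos_of_pos_of_lt_pi hx.1 hx.2
      nlinarith [mul_pos hx.1 this]
  have := key (Set.left_mem_Icc.2 Real.pi_pos.le) ⟨h0.le, hπ.le⟩ h0
  simpa using this

lemma mu_sm_pos : StrictMonoOn muF (Set.Ioo 0 π) := by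
  apply strictMonoOn_of_deriv_pos (convex_Ioo 0 π)
  · apply ContinuousOn.div
    · fun_prop
    · fun_prop
    · intro x hx
      have := Real.sin_pos_of_pos_of_lt_pi hx.1 hx.2
      positivity
  · intro x hx
    rw [interior_Ioo] at hx
    have hs : 0 < Real.sin x := Real.sin_pos_of_pos_of_lt_pi hx.1 hx.2
    have hf : HasDerivAt (fun ω => 2*ω - Real.sin (2*ω)) (2 - Real.cos (2*x) * 2) x := by
      have h1 : HasDerivAt (fun ω : ℝ => 2*ω) 2 x := by
        simpa using (hasDerivAt_id x).const_mul 2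
      have h2 : HasDerivAt (fun ω : ℝ => Real.sin (2*ω)) (Real.cos (2*x) * 2) x :=
        (Real.hasDerivAt_sin (2*x)).comp x h1
      exact h1.sub h2
    have hg : HasDerivAt (fun ω => 2 * Real.sin ω ^ 2) (2 * (2 * Real.sin x ^ 1 * Real.cos x)) x := by
      simpa using (((Real.hasDerivAt_sin x).pow 2).const_mul 2)
    have hgx : (2 * Real.sin x ^ 2) ≠ 0 := by positivity
    have hdiv := hf.div hg hgx
    have hder : deriv muF x = ((2 - Real.cos (2*x) * 2) * (2 * Real.sin x ^ 2) -
        (2*x - Real.sin (2*x)) * (2 * (2 * Real.sin x ^ 1 * Real.cos x))) / (2 * Real.sin x ^ 2) ^ 2 :=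
      hdiv.deriv
    rw [hder]
    apply div_pos _ (by positivity)
    rw [Real.sin_two_mul, Real.cos_two_mul]
    have hpyth := Real.sin_sq_add_cos_sq x
    have haux := aux_pos hx.1 hx.2
    nlinarith [mul_pos hs haux]

lemma mu_strictMonoOn : StrictMonoOn muF (Set.Ioo (-π) π) := by
  have hneg : ∀ ω : ℝ, -π < ω → ω < 0 → muF ω < 0 := by
    intro ω h1 h2
    have := mu_pos (neg_pos.2 h2) (by linarith)
    rw [show ω = -(-ω) by ring, mu_odd]
    linarith
  intro x hx y hy hxy
  rcases lt_trichotomy x 0 with h|h|h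
  · rcases lt_trichotomy y 0 with h'|h'|h'
    · have key := mu_sm_pos (show -y ∈ Set.Ioo 0 π from ⟨by linarith, by linarith [hy.1]⟩)
        (show -x ∈ Set.Ioo 0 π from ⟨by linarith, by linarith [hx.1]⟩) (by linarith)
      rw [mu_odd, mu_odd] at key
      linarith
    · subst h'
      rw [mu_zero]
      exact hneg x hx.1 h
    · exact lt_trans (hneg x hx.1 h) (mu_pos h' hy.2)
  · subst h
    rw [mu_zero]
    exact mu_pos hxy hy.2
  · exact mu_sm_pos ⟨h, hx.2⟩ ⟨lt_trans h hxy, hy.2⟩ hxy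

lemma mu_le {ω : ℝ} (h0 : 0 < ω) (h : ω ≤ 1/2) : muF ω ≤ 2 * ω := by
  have hs3 : ω - ω^3/4 < Real.sin ω := by
    have := Real.sin_gt_sub_cube h0; linarith [pow_pos h0 3]
  have hs2 : 2*ω - (2*ω)^3/4 < Real.sin (2*ω) := by
    have h2p : (0:ℝ) < 2*ω := by linarith
    have := Real.sin_gt_sub_cube h2p; linarith [pow_pos h2p 3]
  have hω2 : ω^2 ≤ 1/4 := by nlinarith
  have hlow : 0 < ω - ω^3/4 := by nlinarith [mul_pos h0 h0]
  have hsp : 0 < Real.sin ω := lt_trans hlow hs3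
  have key : (ω - ω^3/4)^2 < Real.sin ω ^ 2 := pow_lt_pow_left₀ hs3 hlow.le two_ne_zero
  rw [muF, div_le_iff₀ (by positivity)]
  nlinarith [hs2, key, hω2, mul_pos (mul_pos h0 h0) h0, pow_pos h0 5, pow_pos h0 7]

lemma mu_abs_le {ω : ℝ} (h : |ω| ≤ 1/2) : |muF ω| ≤ 2 * |ω| := by
  have hπ : (1:ℝ)/2 < π := by linarith [Real.pi_gt_three]
  rcases lt_trichotomy ω 0 with hω|hω|hω
  · rw [_root_.abs_of_neg hω] at h ⊢
    have h2 := mu_le (neg_pos.2 hω) h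
    have h3 : 0 < muF (-ω) := mu_pos (neg_pos.2 hω) (by linarith)
    rw [mu_odd] at h2 h3
    rw [_root_.abs_of_neg (by linarith)]
    linarith
  · simp [hω, mu_zero]
  · rw [_root_.abs_of_pos hω] at h ⊢
    have h2 := mu_le hω h
    have h3 : 0 ≤ muF ω := (mu_pos hω (by linarith)).le
    rw [_root_.abs_of_nonneg h3]
    exact h2

lemma mu_continuousAt : ∀ {ω : ℝ}, |ω| < π → ContinuousAt muF ω := by
  intro ω hπ
  rcases eq_or_ne ω 0 with rfl|h0
  · have h1 : ∀ᶠ x in nhds (0:ℝ), ‖muF x‖ ≤ 2 * |x| := by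
      filter_upwards [Metric.ball_mem_nhds (0:ℝ) (by norm_num : (0:ℝ) < 1/2)] with x hx
      rw [Metric.mem_ball, Real.dist_eq, sub_zero] at hx
      simpa [Real.norm_eq_abs] using mu_abs_le hx.le
    have h2 : Filter.Tendsto (fun x : ℝ => 2 * |x|) (nhds 0) (nhds 0) := by
      simpa using ((_root_.continuous_abs.tendsto (0:ℝ)).const_mul 2)
    rw [ContinuousAt, mu_zero]
    exact squeeze_zero_norm' h1 h2
  · have hs : Real.sin ω ≠ 0 := by
      rcases abs_lt.1 hπ with ⟨h1, h2⟩
      rcases h0.lt_or_gt with h|h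
      · have hpos : 0 < Real.sin (-ω) := Real.sin_pos_of_pos_of_lt_pi (by linarith) (by linarith)
        rw [Real.sin_neg] at hpos
        intro hc; rw [hc] at hpos; simp at hpos
      · exact (Real.sin_pos_of_pos_of_lt_pi h h2).ne'
    unfold muF
    apply ContinuousAt.div
    · fun_prop
    · fun_prop
    · exact mul_ne_zero two_ne_zero (pow_ne_zero 2 hs)

lemma F_strictMonoOn {ι : Type*} (s : Finset ι) (aa cc : ι → ℝ) (ha : ∀ j ∈ s, 0 < aa j)
    (ha1 : ∀ j ∈ s, aa j ≤ 1) (hc : ∀ j ∈ s, 0 ≤ cc j)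
    (j0 : ι) (hj0 : j0 ∈ s) (hc0 : 0 < cc j0) :
    StrictMonoOn (fun θ => ∑ j ∈ s, aa j * muF (aa j * θ) * cc j) (Set.Ioo (-π) π) := by
  intro x hx y hy hxy
  have key : ∀ j ∈ s, ∀ θ : ℝ, θ ∈ Set.Ioo (-π:ℝ) π → aa j * θ ∈ Set.Ioo (-π:ℝ) π := by
    intro j hj θ hθ
    have habs : |aa j * θ| < π := by
      rw [abs_mul, _root_.abs_of_pos (ha j hj)]
      calc aa j * |θ| ≤ 1 * |θ| :=
            mul_le_mul_of_nonneg_right (ha1 j hj) (abs_nonneg θ)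
        _ < π := by rw [one_mul]; exact abs_lt.2 ⟨hθ.1, hθ.2⟩
    exact abs_lt.1 habs
  have hmono : ∀ j ∈ s, muF (aa j * x) < muF (aa j * y) := fun j hj =>
    mu_strictMonoOn (key j hj x hx) (key j hj y hy)
      (mul_lt_mul_of_pos_left hxy (ha j hj))
  apply Finset.sum_lt_sum
  · intro j hj
    exact mul_le_mul_of_nonneg_right
      (mul_le_mul_of_nonneg_left (hmono j hj).le (ha j hj).le) (hc j hj)
  · exact ⟨j0, hj0, mul_lt_mul_of_pos_right
      (mul_lt_mul_of_pos_left (hmono j0 hj0) (ha j0 hj0)) hc0⟩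

lemma F_continuousOn {ι : Type*} (s : Finset ι) (aa cc : ι → ℝ) (b : ℝ) (ha : ∀ j ∈ s, 0 < aa j)
    (hab : ∀ j ∈ s, aa j * b < π) :
    ContinuousOn (fun θ => ∑ j ∈ s, aa j * muF (aa j * θ) * cc j) (Set.Icc (-b) b) := by
  apply continuousOn_finset_sum
  intro j hj
  apply ContinuousOn.mul _ continuousOn_const
  apply ContinuousOn.mul continuousOn_const
  intro θ hθ
  have hθb : |θ| ≤ b := abs_le.2 ⟨hθ.1, hθ.2⟩
  have habs : |aa j * θ| < π := by
    rw [abs_mul, _root_.abs_of_pos (ha j hj)]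
    calc aa j * |θ| ≤ aa j * b := mul_le_mul_of_nonneg_left hθb (ha j hj).le
      _ < π := hab j hj
  exact ((mu_continuousAt habs).comp
    ((continuous_const.mul continuous_id).continuousAt)).continuousWithinAt

lemma F_neg {ι : Type*} (s : Finset ι) (aa cc : ι → ℝ) (θ : ℝ) :
    (∑ j ∈ s, aa j * muF (aa j * -θ) * cc j) = -∑ j ∈ s, aa j * muF (aa j * θ) * cc j := by
  rw [← Finset.sum_neg_distrib]
  apply Finset.sum_congr rfl
  intro j _
  rw [mul_neg, mu_odd]
  ring


/-- `x / sin x`, extended continuously by `1` at `x = 0`. -/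
def sdiv (x : ℝ) : ℝ := if x = 0 then 1 else x / Real.sin x

/-- The angle `θ(z,t) ∈ (−π,π)` solving `t = ∑ⱼ aⱼ μ(aⱼθ)|zⱼ|²`, chosen by the epsilon
operator (whenever a solution exists it is unique, and `thetaOf` is that solution). -/
def thetaOf (g : Heis l k) : ℝ :=
  Classical.epsilon fun θ : ℝ => θ ∈ Set.Ioo (-Real.pi) Real.pi ∧
    g.2 = ∑ j, a j * muF (a j * θ) * zNormSq l k g.1 j

/-- The squared Carnot–Carathéodory distance from `g = (z,t)` to the origin:
if `z_l ≠ 0`, or `z_l = 0` and `|t| < ∑_{j<l} aⱼ μ(aⱼπ)|zⱼ|²`, it is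
`∑ⱼ (aⱼθ/sin(aⱼθ))² |zⱼ|²` with `θ = θ(z,t)`; otherwise it is
`π(|t| + ∑_{j<l} aⱼ cot(aⱼπ)|zⱼ|²)`. -/
def ccDistSq (g : Heis l k) : ℝ :=
  if g.1 (Fin.last l) ≠ 0 ∨
      |g.2| < ∑ j ∈ Finset.univ.erase (Fin.last l),
        a j * muF (a j * Real.pi) * zNormSq l k g.1 j then
    ∑ j, (sdiv (a j * thetaOf l k a g)) ^ 2 * zNormSq l k g.1 j
  else
    Real.pi * (|g.2| + ∑ j ∈ Finset.univ.erase (Fin.last l),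
      a j * (Real.cos (a j * Real.pi) / Real.sin (a j * Real.pi)) * zNormSq l k g.1 j)

/-- The Carnot–Carathéodory distance from `g` to the origin. -/
def ccDist (g : Heis l k) : ℝ := Real.sqrt (ccDistSq l k a g)

/-- The Carnot–Carathéodory unit ball `B` of `ℍ(𝒦,𝒜)`. -/
def ballCC : Set (Heis l k) := {g | ccDist l k a g < 1}

/-- `m_f`, the mean of `f` over the Carnot–Carathéodory unit ball. -/
def meanB (f : Heis l k → ℝ) : ℝ :=
  (∫ g in ballCC l k a, f g) / (volume (ballCC l k a)).toReal

/-- The polar coordinates map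
`Ψ(u,η) = ((1−e^{−2ia₁η})u₁, …, (1−e^{−2ia_lη})u_l, ∑ⱼ 2aⱼ|uⱼ|²(2aⱼη − sin(2aⱼη)))`. -/
def Psi (u : (i : Fin (l + 1)) → Fin (k i) → ℂ) (η : ℝ) : Heis l k :=
  (fun i => fun j => (1 - Complex.exp (-(2 * Complex.I * (a i : ℂ) * (η : ℂ)))) * u i j,
    ∑ j, 2 * a j * zNormSq l k u j * (2 * a j * η - Real.sin (2 * a j * η)))

/-- `U = (4 ∑ⱼ aⱼ²|uⱼ|²)^{1/2}`. -/
def Ufun (u : (i : Fin (l + 1)) → Fin (k i) → ℂ) : ℝ :=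
  Real.sqrt (4 * ∑ j, (a j) ^ 2 * zNormSq l k u j)

/-- The Jacobian determinant `J(u,η)` of `Ψ` at `(u,η)` (the determinant of the total
derivative of `Ψ` as a map of the real vector space `ℍ ≅ ℝ^{2n+1}`). -/
def jacPsi (u : (i : Fin (l + 1)) → Fin (k i) → ℂ) (η : ℝ) : ℝ :=
  LinearMap.det
    ((fderiv ℝ (fun q : Heis l k => Psi l k a q.1 q.2) (u, η)) : Heis l k →ₗ[ℝ] Heis l k)


/-- Let `0 < a₁ < ⋯ < a_l = 1`, `z = (z₁,…,z_l)` and `t ∈ ℝ`.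
If `z_l ≠ 0`, then for every `t` there is exactly one `θ ∈ (−π,π)` with
`t = ∑ⱼ aⱼ μ(aⱼθ)|zⱼ|²`. If `z_l = 0` and `|t| < ∑_{j<l} aⱼ μ(aⱼπ)|zⱼ|²`, the same
equation also has exactly one solution `θ ∈ (−π,π)`. -/
theorem statement11 (l : ℕ) (k : Fin (l + 1) → ℕ) (hk : ∀ i, 0 < k i)
    (a : Fin (l + 1) → ℝ) (ha0 : 0 < a 0) (haMono : StrictMono a)
    (haLast : a (Fin.last l) = 1)
    (z : (i : Fin (l + 1)) → Fin (k i) → ℂ) (t : ℝ) :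
    (z (Fin.last l) ≠ 0 →
      ∃! θ : ℝ, θ ∈ Set.Ioo (-Real.pi) Real.pi ∧
        t = ∑ j, a j * muF (a j * θ) * zNormSq l k z j) ∧
    (z (Fin.last l) = 0 →
      |t| < ∑ j ∈ Finset.univ.erase (Fin.last l),
        a j * muF (a j * Real.pi) * zNormSq l k z j →
      ∃! θ : ℝ, θ ∈ Set.Ioo (-Real.pi) Real.pi ∧
        t = ∑ j, a j * muF (a j * θ) * zNormSq l k z j) := by
  classical
  have hcnn : ∀ j, 0 ≤ zNormSq l k z j := fun j =>
    Finset.sum_nonneg fun i _ => Complex.normSq_nonneg _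
  have hapos : ∀ j, 0 < a j := fun j => lt_of_lt_of_le ha0 (haMono.monotone (Fin.zero_le j))
  have hale : ∀ j, a j ≤ 1 := fun j => by
    rw [← haLast]; exact haMono.monotone (Fin.le_last j)
  constructor
  · intro hz
    have hcl : 0 < zNormSq l k z (Fin.last l) := by
      rcases Function.ne_iff.1 hz with ⟨i, hi⟩
      have h1 : 0 < Complex.normSq (z (Fin.last l) i) := by
        rw [Complex.normSq_pos]
        simpa using hi
      exact lt_of_lt_of_le h1
        (Finset.single_le_sum (fun _ _ => Complex.normSq_nonneg _) (Finset.mem_univ i))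
    set cl := zNormSq l k z (Fin.last l) with hcl_def
    set ε := min (π/2) (Real.sqrt (cl / (|t|+1))) with hε_def
    have hεpos : 0 < ε := lt_min (by positivity) (Real.sqrt_pos.2 (by positivity))
    have hεle : ε ≤ π/2 := min_le_left _ _
    have hε2 : ε^2 ≤ cl/(|t|+1) := by
      have h1 : ε ≤ Real.sqrt (cl/(|t|+1)) := min_le_right _ _
      have h2 : (Real.sqrt (cl/(|t|+1)))^2 = cl/(|t|+1) := Real.sq_sqrt (by positivity)
      nlinarith [Real.sqrt_nonneg (cl/(|t|+1))]
    set θp := π - ε with hθp_def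
    have hπ3 := Real.pi_gt_three
    have hθp1 : π/2 ≤ θp := by rw [hθp_def]; linarith
    have hθp2 : θp < π := by rw [hθp_def]; linarith
    have hθp0 : 0 < θp := by linarith
    have hsinθp : Real.sin θp ≤ ε := by
      rw [hθp_def, Real.sin_pi_sub]; exact Real.sin_le hεpos.le
    have hsinpos : 0 < Real.sin θp := Real.sin_pos_of_pos_of_lt_pi hθp0 hθp2
    have hmu : (|t|+1) / cl ≤ muF θp := by
      unfold muF
      rw [le_div_iff₀ (by positivity)]
      have h1 : Real.sin (2*θp) ≤ 1 := Real.sin_le_one _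
      have h2 : Real.sin θp ^ 2 ≤ ε^2 := by nlinarith
      have h4 : 0 ≤ (|t|+1)/cl := by positivity
      have h3 : (|t|+1)/cl * ε^2 ≤ 1 := by
        rw [div_mul_eq_mul_div, div_le_one (by positivity)]
        rw [le_div_iff₀ (by positivity)] at hε2
        linarith
      nlinarith [mul_le_mul_of_nonneg_left h2 h4, h3, h1, hθp1, hπ3]
    have hterm_nonneg : ∀ j ∈ Finset.univ,
        0 ≤ a j * muF (a j * θp) * zNormSq l k z j := by
      intro j _
      have h0 : 0 ≤ a j * θp := mul_nonneg (hapos j).le hθp0.le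
      have hlt : a j * θp < π := by nlinarith [hale j, hapos j]
      exact mul_nonneg (mul_nonneg (hapos j).le (mu_nonneg h0 hlt)) (hcnn j)
    have hFθp : |t| + 1 ≤ ∑ j, a j * muF (a j * θp) * zNormSq l k z j := by
      have hterm := Finset.single_le_sum (f := fun j => a j * muF (a j * θp) * zNormSq l k z j)
        hterm_nonneg (Finset.mem_univ (Fin.last l))
      rw [haLast, one_mul, one_mul] at hterm
      have hmul := mul_le_mul_of_nonneg_right hmu hcl.le
      rw [div_mul_cancel₀ _ (ne_of_gt hcl)] at hmul
      exact le_trans hmul hterm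
    have hFneg : ∑ j, a j * muF (a j * -θp) * zNormSq l k z j
        = -∑ j, a j * muF (a j * θp) * zNormSq l k z j := F_neg _ _ _ _
    have hcont : ContinuousOn (fun θ => ∑ j, a j * muF (a j * θ) * zNormSq l k z j)
        (Set.Icc (-θp) θp) :=
      F_continuousOn Finset.univ a (zNormSq l k z) θp (fun j _ => hapos j)
        (fun j _ => by nlinarith [hale j, hapos j])
    have hsub : Set.Icc (-θp) θp ⊆ Set.Ioo (-π) π := fun x hx =>
      ⟨lt_of_lt_of_le (by linarith) hx.1, lt_of_le_of_lt hx.2 hθp2⟩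
    have ht_mem : t ∈ Set.Icc (∑ j, a j * muF (a j * -θp) * zNormSq l k z j)
        (∑ j, a j * muF (a j * θp) * zNormSq l k z j) := by
      rw [hFneg]
      constructor
      · linarith [neg_abs_le t]
      · linarith [le_abs_self t]
    obtain ⟨θ, hθmem, hθeq⟩ := intermediate_value_Icc (by linarith : -θp ≤ θp) hcont ht_mem
    refine ⟨θ, ⟨hsub hθmem, hθeq.symm⟩, ?_⟩
    rintro θ' ⟨hθ'mem, hθ'eq⟩
    exact (F_strictMonoOn Finset.univ a (zNormSq l k z) (fun j _ => hapos j)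
      (fun j _ => hale j) (fun j _ => hcnn j) (Fin.last l) (Finset.mem_univ _) hcl).injOn
      hθ'mem (hsub hθmem) (hθ'eq.symm.trans hθeq.symm)
  · intro hz ht
    have hcl0 : zNormSq l k z (Fin.last l) = 0 := by
      simp [zNormSq, hz]
    have hFrw : ∀ θ : ℝ, ∑ j, a j * muF (a j * θ) * zNormSq l k z j
        = ∑ j ∈ Finset.univ.erase (Fin.last l), a j * muF (a j * θ) * zNormSq l k z j :=
      fun θ => (Finset.sum_erase _ (by rw [hcl0, mul_zero])).symm
    have haltl : ∀ j ∈ Finset.univ.erase (Fin.last l), a j < 1 := by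
      intro j hj
      rw [← haLast]
      exact haMono (lt_of_le_of_ne (Fin.le_last j) (Finset.mem_erase.1 hj).1)
    have hS0 : 0 < ∑ j ∈ Finset.univ.erase (Fin.last l),
        a j * muF (a j * π) * zNormSq l k z j :=
      lt_of_le_of_lt (abs_nonneg t) ht
    have hex : ∃ j ∈ Finset.univ.erase (Fin.last l), 0 < zNormSq l k z j := by
      by_contra hcon
      push_neg at hcon
      have hzero : ∑ j ∈ Finset.univ.erase (Fin.last l),
          a j * muF (a j * π) * zNormSq l k z j = 0 :=
        Finset.sum_eq_zero fun j hj => by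
          rw [le_antisymm (hcon j hj) (hcnn j), mul_zero]
      rw [hzero] at hS0
      exact lt_irrefl _ hS0
    obtain ⟨j0, hj0, hcj0⟩ := hex
    have hcont : ContinuousOn
        (fun θ => ∑ j ∈ Finset.univ.erase (Fin.last l), a j * muF (a j * θ) * zNormSq l k z j)
        (Set.Icc (-π) π) :=
      F_continuousOn _ a (zNormSq l k z) π (fun j _ => hapos j)
        (fun j hj => by nlinarith [haltl j hj, hapos j, Real.pi_pos])
    have hFneg : ∑ j ∈ Finset.univ.erase (Fin.last l), a j * muF (a j * -π) * zNormSq l k z j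
        = -∑ j ∈ Finset.univ.erase (Fin.last l), a j * muF (a j * π) * zNormSq l k z j :=
      F_neg _ _ _ _
    rcases abs_lt.1 ht with ⟨h1, h2⟩
    have ht_mem : t ∈ Set.Icc
        (∑ j ∈ Finset.univ.erase (Fin.last l), a j * muF (a j * -π) * zNormSq l k z j)
        (∑ j ∈ Finset.univ.erase (Fin.last l), a j * muF (a j * π) * zNormSq l k z j) := by
      rw [hFneg]
      exact ⟨by linarith, h2.le⟩
    obtain ⟨θ, hθmem, hθeq⟩ :=
      intermediate_value_Icc (by linarith [Real.pi_pos] : -π ≤ π) hcont ht_mem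
    have hθIoo : θ ∈ Set.Ioo (-π) π := by
      refine ⟨lt_of_le_of_ne hθmem.1 ?_, lt_of_le_of_ne hθmem.2 ?_⟩
      · intro h
        rw [← h] at hθeq
        simp only at hθeq
        rw [hFneg] at hθeq
        linarith
      · intro h
        rw [h] at hθeq
        simp only at hθeq
        linarith
    refine ⟨θ, ⟨hθIoo, by rw [hFrw θ]; exact hθeq.symm⟩, ?_⟩
    rintro θ' ⟨hθ'mem, hθ'eq⟩
    rw [hFrw θ'] at hθ'eq
    exact (F_strictMonoOn _ a (zNormSq l k z) (fun j _ => hapos j)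
      (fun j hj => (haltl j hj).le) (fun j _ => hcnn j) j0 hj0 hcj0).injOn
      hθ'mem hθIoo (hθ'eq.symm.trans hθeq.symm)


end
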